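/- Let v be a type α Dyck word and let B = 0w0 where w is a Dyck word of length |v| − 2. Then no nonempty proper prefix of v equals a nonempty proper suffix of B, and no proper prefix of B of length greater than 1 equals a proper suffix of v. -/

import Mathlib

/-- number of 1's in a binary word (1 = `true`) -/
def ones (w : List Bool) : ℕ := w.count true

/-- number of 0's in a binary word (0 = `false`) -/
def zeros (w : List Bool) : ℕ := w.count false

/-- Dyck word: equally many 1's and 0's, every prefix has at least as many 1's as 0's. -/
def IsDyck (w : List Bool) : Prop :=
  ones w = zeros w ∧ ∀ γ : List Bool, γ <+: w → zeros γ ≤ ones γ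

/-- type α Dyck word: a Dyck word all of whose nonempty proper prefixes have
strictly more 1's than 0's. -/
def IsAlphaDyck (v : List Bool) : Prop :=
  IsDyck v ∧ ∀ γ : List Bool, γ <+: v → γ ≠ [] → γ ≠ v → zeros γ < ones γ

/-- two strings are non-overlapping: no nonempty proper prefix of either equals a
nonempty proper suffix of the other. -/
def NonOverlapping (x y : List Bool) : Prop :=
  ∀ s : List Bool, s ≠ [] →
    ¬(s <+: x ∧ s ≠ x ∧ s <:+ y ∧ s ≠ y) ∧
    ¬(s <+: y ∧ s ≠ y ∧ s <:+ x ∧ s ≠ x)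

/-!
Balance is additive, so a suffix of a balanced word carries the surplus of 0's that the
complementary prefix lacks: every suffix of a Dyck word has at least as many 0's as 1's (strictly
more for a nonempty suffix of `w0`), and every nonempty proper suffix of a type α word has strictly
more 0's. A nonempty proper prefix of `v` that is a proper suffix of `0w0` would thus have more
1's and more 0's at once. Conversely, a proper prefix `0p` of `0w0` with `p` nonempty has `p` a
prefix of `w`, so not more 0's than 1's, yet as a suffix of `v` it would make `p` a nonempty
proper suffix of `v`.
-/

@[simp]
lemma ones_append (a b : List Bool) : ones (a ++ b) = ones a + ones b := List.count_append

@[simp]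
lemma zeros_append (a b : List Bool) : zeros (a ++ b) = zeros a + zeros b := List.count_append

lemma IsDyck.ones_le_zeros_of_suffix {w s : List Bool} (hw : IsDyck w) (hs : s <:+ w) :
    ones s ≤ zeros s := by
  obtain ⟨r, rfl⟩ := hs
  have hr := hw.2 r (List.prefix_append r s)
  have hbal := hw.1
  simp only [ones_append, zeros_append] at hbal
  omega

lemma IsDyck.ones_lt_zeros_of_suffix_append_false {w s : List Bool} (hw : IsDyck w)
    (hs : s <:+ w ++ [false]) (hne : s ≠ []) : ones s < zeros s := by
  obtain ⟨t, rfl, ht⟩ := (List.suffix_concat_iff.mp hs).resolve_left hne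
  have ht_le := hw.ones_le_zeros_of_suffix ht
  have h_ones : ones [false] = 0 := rfl
  have h_zeros : zeros [false] = 1 := rfl
  simp only [ones_append, zeros_append]
  omega

lemma IsAlphaDyck.ones_lt_zeros_of_suffix {v s : List Bool} (hv : IsAlphaDyck v)
    (hs : s <:+ v) (hne : s ≠ []) (hsv : s ≠ v) : ones s < zeros s := by
  obtain ⟨r, rfl⟩ := hs
  have hr_ne : r ≠ [] := by rintro rfl; exact hsv rfl
  have hr_proper : r ≠ r ++ s := fun h => hne (List.append_right_eq_self.mp h.symm)
  have hr := hv.2 r (List.prefix_append r s) hr_ne hr_proper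
  have hbal := hv.1.1
  simp only [ones_append, zeros_append] at hbal
  omega

theorem alpha_type5_overlap_restrictions_general (v w B : List Bool)
    (hα : IsAlphaDyck v)
    (hw : IsDyck w)
    (hB : B = false :: (w ++ [false])) :
    (∀ s : List Bool, s ≠ [] → s <+: v → s ≠ v → ¬(s <:+ B ∧ s ≠ B)) ∧
    (∀ s : List Bool, 1 < s.length → s <+: B → s ≠ B → ¬(s <:+ v ∧ s ≠ v)) := by
  subst hB
  constructor
  · rintro s hne hpre hsv ⟨hsuf, hsB⟩
    have hs : s <:+ w ++ [false] := (List.suffix_cons_iff.mp hsuf).resolve_left hsB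
    have h_more_zeros := hw.ones_lt_zeros_of_suffix_append_false hs hne
    have h_more_ones := hα.2 s hpre hne hsv
    omega
  · rintro s hlen hpre hsB ⟨hsuf, -⟩
    obtain ⟨p, rfl, hp⟩ :=
      (List.prefix_cons_iff.mp hpre).resolve_left (by rintro rfl; simp at hlen)
    have hpw : p <+: w :=
      (List.prefix_concat_iff.mp hp).resolve_left (by rintro rfl; exact hsB rfl)
    have hpv : p <:+ v := (List.suffix_cons false p).trans hsuf
    have hp_ne : p ≠ [] := by rintro rfl; simp at hlen
    have hp_proper : p ≠ v := by
      rintro rfl; have := hsuf.length_le; simp at this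
    have h_more_zeros := hα.ones_lt_zeros_of_suffix hpv hp_ne hp_proper
    have h_not_more_zeros := hw.2 p hpw
    omega

/-- for v type α and B = 0w0 with w Dyck of length |v| − 2: no nonempty proper
prefix of v is a nonempty proper suffix of B, and no proper prefix of B of length > 1 is a
proper suffix of v. -/
theorem alpha_type5_overlap_restrictions (v w B : List Bool)
    (hα : IsAlphaDyck v)
    (hw : IsDyck w) (hwl : w.length = v.length - 2)
    (hB : B = false :: (w ++ [false])) :
    (∀ s : List Bool, s ≠ [] → s <+: v → s ≠ v → ¬(s <:+ B ∧ s ≠ B)) ∧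
    (∀ s : List Bool, 1 < s.length → s <+: B → s ≠ B → ¬(s <:+ v ∧ s ≠ v)) :=
  alpha_type5_overlap_restrictions_general v w B hα hw hB
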